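/- arXiv:2511.04415 — 2 statements merged into one kernel-verified Lean document; each statement's English description precedes it below -/
import Mathlib

section
/- Let Y : [0,∞) → ℝ be continuous, nonnegative, with lim_{t→∞} (1/t)∫₀ᵗ Y(s) ds = m > γ > 0, and let I : [0,∞) → (0,1) solve I'(t) = I(t)(1−I(t))Y(t) − γ I(t), I(0) = x ∈ (0,1). Then limsup_{t→∞} I(t) ≥ I* where I* = 1 − γ/m, i.e. the unique solution in (0,1) of 1/(1−I*) = m/γ. -/
open MeasureTheory intervalIntegral Filter

/-!
Suppose `limsup I < c < 1 - γ/m`. Along the SIS equation the log-odds `logit I` has derivative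
`Y - γ/(1 - I)`, which eventually dominates `Y - γ/(1 - c)`; since `Y` has mean `m > γ/(1 - c)`,
integrating forces `logit I → ∞`, whereas `I < c` keeps `logit I` below `logit c`.
-/

noncomputable def logit (x : ℝ) : ℝ := Real.log x - Real.log (1 - x)

theorem logit_le_logit {x y : ℝ} (hx : 0 < x) (hxy : x ≤ y) (hy : y < 1) :
    logit x ≤ logit y := by
  have hlog : Real.log x ≤ Real.log y := Real.log_le_log hx hxy
  have hlog_one_sub : Real.log (1 - y) ≤ Real.log (1 - x) :=
    Real.log_le_log (sub_pos.2 hy) (by linarith)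
  unfold logit
  linarith

theorem HasDerivAt.logit {f : ℝ → ℝ} {f' t : ℝ} (hf : HasDerivAt f f' t) (h0 : 0 < f t)
    (h1 : f t < 1) : HasDerivAt (fun u => logit (f u)) (f' / (f t * (1 - f t))) t := by
  have h1' : 1 - f t ≠ 0 := (sub_pos.2 h1).ne'
  refine ((hf.log h0.ne').sub ((hf.const_sub 1).log h1')).congr_deriv ?_
  field_simp
  ring

theorem tendsto_sub_mul_atTop {F : ℝ → ℝ} {a m : ℝ}
    (hF : Tendsto (fun t => (1 / t) * F t) atTop (nhds m)) (ham : a < m) :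
    Tendsto (fun t => F t - a * t) atTop atTop := by
  have hgrowth : Tendsto (fun t => t * ((1 / t) * F t - a)) atTop atTop :=
    tendsto_id.atTop_mul_pos (sub_pos.2 ham) (hF.sub_const a)
  refine hgrowth.congr' ?_
  filter_upwards [eventually_gt_atTop 0] with t ht
  field_simp

theorem tendsto_atTop_of_hasDerivAt_ge {f f' Y : ℝ → ℝ} {a m T : ℝ} (hYc : Continuous Y)
    (hm : Tendsto (fun t => (1 / t) * ∫ s in (0:ℝ)..t, Y s) atTop (nhds m)) (ham : a < m)
    (hf : ∀ t, T ≤ t → HasDerivAt f (f' t) t) (hf' : ∀ t, T ≤ t → Y t - a ≤ f' t) :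
    Tendsto f atTop atTop := by
  set G : ℝ → ℝ := fun u => (∫ s in (0:ℝ)..u, Y s) - a * u
  have hG : ∀ t, HasDerivAt G (Y t - a) t := fun t =>
    ((hYc.integral_hasStrictDerivAt 0 t).hasDerivAt.sub
      ((hasDerivAt_id' t).const_mul a)).congr_deriv (by ring)
  have hderiv : ∀ t, T ≤ t → HasDerivAt (fun u => f u - G u) (f' t - (Y t - a)) t :=
    fun t ht => (hf t ht).sub (hG t)
  have hmono : MonotoneOn (fun u => f u - G u) (Set.Ici T) := by
    refine monotoneOn_of_hasDerivWithinAt_nonneg (convex_Ici T)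
      (fun t ht => (hderiv t ht).continuousAt.continuousWithinAt)
      (fun t ht => (hderiv t (interior_subset ht)).hasDerivWithinAt)
      (fun t ht => sub_nonneg.2 (hf' t (interior_subset ht)))
  refine tendsto_atTop_mono' _ ?_ (tendsto_atTop_add_const_left _ (f T - G T)
    (tendsto_sub_mul_atTop hm ham))
  filter_upwards [eventually_ge_atTop T] with t ht
  have hT_le_t := hmono Set.self_mem_Ici ht ht
  linarith

theorem hasDerivAt_logit_of_sis {I Y : ℝ → ℝ} {γ t : ℝ}
    (hI : HasDerivAt I (I t * (1 - I t) * Y t - γ * I t) t) (h0 : 0 < I t) (h1 : I t < 1) :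
    HasDerivAt (fun u => logit (I u)) (Y t - γ / (1 - I t)) t := by
  have h1' : 1 - I t ≠ 0 := (sub_pos.2 h1).ne'
  refine (hI.logit h0 h1).congr_deriv ?_
  field_simp

theorem SIS_persistence_limsup_general (γ m : ℝ) (hγ : 0 < γ) (hmγ : γ < m)
    (Y I : ℝ → ℝ) (hYc : Continuous Y)
    (hm : Tendsto (fun t => (1 / t) * ∫ s in (0:ℝ)..t, Y s) atTop (nhds m))
    (hIran : ∀ t, 0 ≤ t → I t ∈ Set.Ioo (0:ℝ) 1)
    (hode : ∀ t, 0 ≤ t → HasDerivAt I (I t * (1 - I t) * Y t - γ * I t) t) :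
    1 - γ / m ≤ limsup I atTop := by
  by_contra! hlimsup
  obtain ⟨c, hIc, hcm⟩ := exists_between hlimsup
  have hbdd : IsBoundedUnder (· ≤ ·) atTop I := isBoundedUnder_of_eventually_le (a := 1)
    (by filter_upwards [eventually_ge_atTop 0] with t ht using (hIran t ht).2.le)
  obtain ⟨T, hT⟩ := eventually_atTop.1
    ((eventually_lt_of_limsup_lt hIc hbdd).and (eventually_ge_atTop 0))
  have hm0 : 0 < m := hγ.trans hmγ
  have hc1 : 0 < 1 - c := by linarith [div_pos hγ hm0]
  have hγc : γ / (1 - c) < m := by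
    have := (div_lt_iff₀ hm0).1 (by linarith : γ / m < 1 - c)
    rwa [div_lt_iff₀' hc1]
  have hlogit_atTop : Tendsto (fun t => logit (I t)) atTop atTop :=
    tendsto_atTop_of_hasDerivAt_ge hYc hm hγc
      (fun t ht => hasDerivAt_logit_of_sis (hode t (hT t ht).2)
        (hIran t (hT t ht).2).1 (hIran t (hT t ht).2).2)
      (fun t ht => by
        have hIt_lt : I t < c := (hT t ht).1
        gcongr)
  obtain ⟨t, ht_big, ht_T⟩ :=
    ((hlogit_atTop.eventually_gt_atTop (logit c)).and (eventually_ge_atTop T)).exists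
  have hIt := hIran t (hT t ht_T).2
  exact (ht_big.trans_le (logit_le_logit hIt.1 (hT t ht_T).1.le (by linarith))).false

/-- Persistence (upper-limit part): if the long-run average transmission rate `m > γ`, then
`limsup I(t) ≥ I* = 1 - γ/m`. -/
theorem SIS_persistence_limsup (γ x m : ℝ) (hγ : 0 < γ) (hmγ : γ < m)
    (hx : x ∈ Set.Ioo (0:ℝ) 1)
    (Y I : ℝ → ℝ) (hYc : Continuous Y) (hY : ∀ t, 0 ≤ t → 0 ≤ Y t)
    (hm : Tendsto (fun t => (1 / t) * ∫ s in (0:ℝ)..t, Y s) atTop (nhds m))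
    (hI0 : I 0 = x) (hIran : ∀ t, 0 ≤ t → I t ∈ Set.Ioo (0:ℝ) 1)
    (hode : ∀ t, 0 ≤ t → HasDerivAt I (I t * (1 - I t) * Y t - γ * I t) t) :
    1 - γ / m ≤ limsup I atTop :=
  SIS_persistence_limsup_general γ m hγ hmγ Y I hYc hm hIran hode
end

section
/- Let Y : [0,∞) → ℝ be continuous, nonnegative, with lim_{t→∞} (1/t)∫₀ᵗ Y(s) ds = m > γ > 0, and let I : [0,∞) → (0,1) solve I'(t) = I(t)(1−I(t))Y(t) − γ I(t), I(0) = x ∈ (0,1). Then liminf_{t→∞} I(t) ≤ I* where I* = 1 − γ/m. -/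
open MeasureTheory intervalIntegral Filter

/-- Persistence (lower-limit part): if the long-run average transmission rate `m > γ`, then
`liminf I(t) ≤ I* = 1 - γ/m`. -/
theorem SIS_persistence_liminf (γ x m : ℝ) (hγ : 0 < γ) (hmγ : γ < m)
    (hx : x ∈ Set.Ioo (0:ℝ) 1)
    (Y I : ℝ → ℝ) (hYc : Continuous Y) (hY : ∀ t, 0 ≤ t → 0 ≤ Y t)
    (hm : Tendsto (fun t => (1 / t) * ∫ s in (0:ℝ)..t, Y s) atTop (nhds m))
    (hI0 : I 0 = x) (hIran : ∀ t, 0 ≤ t → I t ∈ Set.Ioo (0:ℝ) 1)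
    (hode : ∀ t, 0 ≤ t → HasDerivAt I (I t * (1 - I t) * Y t - γ * I t) t) :
    liminf I atTop ≤ 1 - γ / m := by
  by_contra hcon
  push_neg at hcon
  have hm0 : 0 < m := hγ.trans hmγ
  have hγm1 : γ / m < 1 := (div_lt_one hm0).2 hmγ
  have hγm0 : 0 < γ / m := div_pos hγ hm0
  have hIub : ∀ᶠ t in atTop, I t ≤ 1 :=
    (eventually_ge_atTop 0).mono fun t ht => (hIran t ht).2.le
  have hIlb : ∀ᶠ t in atTop, (0:ℝ) ≤ I t :=
    (eventually_ge_atTop 0).mono fun t ht => (hIran t ht).1.le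
  have hbddge : IsBoundedUnder (· ≥ ·) atTop I := ⟨0, eventually_map.2 hIlb⟩
  have hbddle : IsBoundedUnder (· ≤ ·) atTop I := ⟨1, eventually_map.2 hIub⟩
  set L := liminf I atTop with hL
  have hL1 : L ≤ 1 := liminf_le_of_frequently_le hIub.frequently hbddge
  set a : ℝ := (1 - γ/m + L)/2 with ha
  have ha1 : 1 - γ/m < a := by rw [ha]; linarith
  have ha2 : a < L := by rw [ha]; linarith
  have ha0 : 0 < a := by linarith
  have haU : a < 1 := by rw [ha]; linarith
  have h1a : 0 < 1 - a := by linarith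
  have heva : ∀ᶠ t in atTop, a < I t :=
    eventually_lt_of_lt_liminf ha2 hbddge
  obtain ⟨T₀, hT₀⟩ := eventually_atTop.1 heva
  set T : ℝ := max T₀ 0 with hTdef
  have hT0 : 0 ≤ T := le_max_right _ _
  have hTa : ∀ t, T ≤ t → a ≤ I t := fun t ht => (hT₀ t ((le_max_left _ _).trans ht)).le
  set m' : ℝ := γ / (1 - a) with hm'def
  have hm' : m < m' := by
    rw [hm'def, lt_div_iff₀ h1a]
    have := (lt_div_iff₀ hm0).1 (by linarith : 1 - a < γ / m)
    nlinarith
  -- G and its derivative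
  set G : ℝ → ℝ := fun t => Real.log (I t) - Real.log (1 - I t) with hGdef
  have hGderiv : ∀ t, 0 ≤ t → HasDerivAt G (Y t - γ / (1 - I t)) t := by
    intro t ht
    obtain ⟨hI0', hI1'⟩ := hIran t ht
    have h1I : 0 < 1 - I t := by linarith
    have h1 : HasDerivAt (fun s => Real.log (I s))
        ((I t * (1 - I t) * Y t - γ * I t) / I t) t :=
      (hode t ht).log hI0'.ne'
    have h2 : HasDerivAt (fun s => Real.log (1 - I s))
        ((-(I t * (1 - I t) * Y t - γ * I t)) / (1 - I t)) t := by
      have := ((hasDerivAt_const t (1:ℝ)).sub (hode t ht)).log h1I.ne'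
      simpa using this
    have := h1.sub h2
    have heq : (I t * (1 - I t) * Y t - γ * I t) / I t -
        (-(I t * (1 - I t) * Y t - γ * I t)) / (1 - I t) = Y t - γ / (1 - I t) := by
      field_simp
      ring
    rw [heq] at this
    exact this
  -- continuity facts
  have hIcont : ∀ s, 0 ≤ s → ContinuousAt I s := fun s hs => (hode s hs).continuousAt
  have hfcont : ∀ t, T ≤ t →
      ContinuousOn (fun s => Y s - γ / (1 - I s)) (Set.Icc T t) := by
    intro t ht
    refine hYc.continuousOn.sub (continuousOn_const.div ?_ ?_)
    · exact continuousOn_const.sub fun s hs =>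
        ((hIcont s (hT0.trans hs.1)).continuousWithinAt)
    · intro s hs
      have := (hIran s (hT0.trans hs.1)).2
      intro h; linarith [sub_eq_zero.1 h]
  have hint : ∀ t, T ≤ t →
      IntervalIntegrable (fun s => Y s - γ / (1 - I s)) volume T t := by
    intro t ht
    exact ((hfcont t ht).mono (by rw [Set.uIcc_of_le ht])).intervalIntegrable
  -- FTC
  have hFTC : ∀ t, T ≤ t → G t - G T = ∫ s in T..t, (Y s - γ / (1 - I s)) := by
    intro t ht
    refine (intervalIntegral.integral_eq_sub_of_hasDerivAt ?_ (hint t ht)).symm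
    intro s hs
    rw [Set.uIcc_of_le ht] at hs
    exact hGderiv s (hT0.trans hs.1)
  -- pointwise bound and integral inequality
  have hbound : ∀ t, T ≤ t →
      (∫ s in T..t, (Y s - γ / (1 - I s))) ≤ (∫ s in (0:ℝ)..t, Y s) - (∫ s in (0:ℝ)..T, Y s) - m' * (t - T) := by
    intro t ht
    have hstep : (∫ s in T..t, (Y s - γ / (1 - I s))) ≤ ∫ s in T..t, (Y s - m') := by
      refine intervalIntegral.integral_mono_on ht (hint t ht)
        ((hYc.sub continuous_const).intervalIntegrable _ _) ?_
      intro s hs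
      have haI : a ≤ I s := hTa s hs.1
      have h1I : 0 < 1 - I s := by linarith [(hIran s (hT0.trans hs.1)).2]
      have : m' ≤ γ / (1 - I s) := by
        rw [hm'def]
        exact div_le_div_of_nonneg_left hγ.le h1I (by linarith)
      linarith
    have hYi : ∀ u v : ℝ, IntervalIntegrable Y volume u v := fun u v => hYc.intervalIntegrable u v
    have hsplit : (∫ s in T..t, Y s) = (∫ s in (0:ℝ)..t, Y s) - (∫ s in (0:ℝ)..T, Y s) := by
      have := intervalIntegral.integral_add_adjacent_intervals (hYi 0 T) (hYi T t)
      linarith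
    have hconst : (∫ s in T..t, (Y s - m')) = (∫ s in T..t, Y s) - m' * (t - T) := by
      rw [intervalIntegral.integral_sub (hYi T t)
        (intervalIntegrable_const), intervalIntegral.integral_const]
      simp [smul_eq_mul, mul_comm]
    rw [hconst, hsplit] at hstep
    linarith
  -- lower bound on G
  set c : ℝ := Real.log a - Real.log (1 - a) with hc
  have hGlb : ∀ t, T ≤ t → c ≤ G t := by
    intro t ht
    have haI : a ≤ I t := hTa t ht
    obtain ⟨hI0', hI1'⟩ := hIran t (hT0.trans ht)
    have h1 : Real.log a ≤ Real.log (I t) := Real.log_le_log ha0 haI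
    have h2 : Real.log (1 - I t) ≤ Real.log (1 - a) :=
      Real.log_le_log (by linarith) (by linarith)
    simp only [hGdef, hc]
    linarith
  -- combine: for t ≥ T, K + m'*t ≤ ∫₀ᵗ Y
  set K : ℝ := c - G T + (∫ s in (0:ℝ)..T, Y s) - m' * T with hK
  have hkey : ∀ t, T ≤ t → K + m' * t ≤ ∫ s in (0:ℝ)..t, Y s := by
    intro t ht
    have h1 := hFTC t ht
    have h2 := hbound t ht
    have h3 := hGlb t ht
    have h4 : c - G T ≤ ((∫ s in (0:ℝ)..t, Y s) - ∫ s in (0:ℝ)..T, Y s) - (m' * t - m' * T) := by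
      have : m' * (t - T) = m' * t - m' * T := by ring
      rw [this] at h2
      rw [← h1] at h2
      linarith
    rw [hK]
    linarith
  -- take limits
  have hlim1 : Tendsto (fun t : ℝ => K / t + m') atTop (nhds (0 + m')) :=
    (Tendsto.div_atTop tendsto_const_nhds tendsto_id).add tendsto_const_nhds
  have hle : m < 0 + m' := by linarith
  have : (0 : ℝ) + m' ≤ m := by
    refine le_of_tendsto_of_tendsto hlim1 hm ?_
    filter_upwards [eventually_ge_atTop (max T 1)] with t ht
    have htT : T ≤ t := (le_max_left _ _).trans ht
    have ht1 : (1:ℝ) ≤ t := (le_max_right _ _).trans ht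
    have ht0 : 0 < t := by linarith
    have hk := hkey t htT
    have e1 : K / t + m' = (K + m' * t) / t := by field_simp
    have e2 : (1:ℝ) / t * (∫ s in (0:ℝ)..t, Y s) = (∫ s in (0:ℝ)..t, Y s) / t := by ring
    show K / t + m' ≤ 1 / t * ∫ s in (0:ℝ)..t, Y s
    rw [e1, e2]
    gcongr
  linarith
end
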